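/- Each of the switch actions s₁ and s₂ on L_Y is an involution (s₁ ∘ s₁ = id and s₂ ∘ s₂ = id), preserves the bilinear form (⟨s_a(λ), s_a(μ)⟩ = ⟨λ,μ⟩ for all λ, μ ∈ L_Y, a = 1, 2), and fixes δ = 2H₁ + 2H₂ − E₁ − ⋯ − E₈. -/

import Mathlib

open Finset

/-- `L_Y`: the free ℤ-module with basis `H₁, H₂, E₁, …, E₈`; index `0` is `H₁`,
index `1` is `H₂`, and index `i+1` is `Eᵢ` for `i = 1,…,8`. -/
abbrev LY : Type := Fin 10 → ℤ

noncomputable def basisY : Module.Basis (Fin 10) ℤ LY := Pi.basisFun ℤ (Fin 10)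

/-- The basis vectors of `L_Y`: `bY 0 = H₁`, `bY 1 = H₂`, `bY (i+1) = Eᵢ` for `i = 1,…,8`. -/
noncomputable def bY (a : Fin 10) : LY := basisY a

/-- The symmetric bilinear form on `L_Y` with `⟨H₁,H₂⟩ = 1`, `⟨H₁,H₁⟩ = ⟨H₂,H₂⟩ = 0`,
`⟨Eᵢ,Eᵢ⟩ = -1`, and all other products of distinct basis vectors `0`. -/
noncomputable def formY : LY →ₗ[ℤ] LY →ₗ[ℤ] ℤ :=
  Matrix.toLinearMap₂' ℤ (Matrix.of (fun a b : Fin 10 =>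
    if (a = 0 ∧ b = 1) ∨ (a = 1 ∧ b = 0) then (1 : ℤ)
    else if a = b ∧ a ≠ 0 ∧ a ≠ 1 then -1 else 0))

/-- The anticanonical class `δ = 2H₁ + 2H₂ - E₁ - ⋯ - E₈`. -/
noncomputable def deltaY : LY :=
  (2 : ℤ) • bY 0 + (2 : ℤ) • bY 1 - ∑ k ∈ ({0, 1} : Finset (Fin 10))ᶜ, bY k

/-- The Kac translation `T_α(λ) = λ + ⟨δ,λ⟩α + (⟨δ,λ⟩ - ⟨α,λ⟩)δ` on `L_Y`. -/
noncomputable def kacY (α : LY) : LY →ₗ[ℤ] LY :=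
  LinearMap.id + (formY deltaY).smulRight α + (formY deltaY - formY α).smulRight deltaY

/-- The vertical switch action `s₁` on `L_Y`: `s₁(H₁) = H₁`,
`s₁(H₂) = 4H₁ + H₂ - Σₖ Eₖ`, `s₁(Eⱼ) = H₁ - Eⱼ`. -/
noncomputable def sw1 : LY →ₗ[ℤ] LY :=
  basisY.constr ℤ (fun a =>
    if a = 0 then bY 0
    else if a = 1 then
      (4 : ℤ) • bY 0 + bY 1 - ∑ k ∈ ({0, 1} : Finset (Fin 10))ᶜ, bY k
    else bY 0 - bY a)

/-- The horizontal switch action `s₂` on `L_Y`: `s₂(H₁) = H₁ + 4H₂ - Σₖ Eₖ`,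
`s₂(H₂) = H₂`, `s₂(Eⱼ) = H₂ - Eⱼ`. -/
noncomputable def sw2 : LY →ₗ[ℤ] LY :=
  basisY.constr ℤ (fun a =>
    if a = 0 then
      bY 0 + (4 : ℤ) • bY 1 - ∑ k ∈ ({0, 1} : Finset (Fin 10))ᶜ, bY k
    else if a = 1 then bY 1
    else bY 1 - bY a)

/- auxiliary material -/

def GY : Matrix (Fin 10) (Fin 10) ℤ := Matrix.of (fun a b : Fin 10 =>
    if (a = 0 ∧ b = 1) ∨ (a = 1 ∧ b = 0) then (1 : ℤ)
    else if a = b ∧ a ≠ 0 ∧ a ≠ 1 then -1 else 0)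

def M1 : Matrix (Fin 10) (Fin 10) ℤ := Matrix.of fun i j =>
  if j = 0 then (if i = 0 then 1 else 0)
  else if j = 1 then (if i = 0 then 4 else if i = 1 then 1 else -1)
  else (if i = 0 then 1 else if i = j then -1 else 0)

def M2 : Matrix (Fin 10) (Fin 10) ℤ := Matrix.of fun i j =>
  if j = 0 then (if i = 0 then 1 else if i = 1 then 4 else -1)
  else if j = 1 then (if i = 1 then 1 else 0)
  else (if i = 1 then 1 else if i = j then -1 else 0)

def dvec : LY := fun i => if i = 0 ∨ i = 1 then 2 else -1

lemma sumE (i : Fin 10) : (∑ k ∈ ({0, 1} : Finset (Fin 10))ᶜ, bY k) i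
    = if i = 0 ∨ i = 1 then 0 else 1 := by
  have h : ({0, 1} : Finset (Fin 10))ᶜ = {2,3,4,5,6,7,8,9} := by decide
  rw [h]
  fin_cases i <;> simp [bY, basisY, Pi.basisFun_apply]

lemma toLin'_basis (M : Matrix (Fin 10) (Fin 10) ℤ) (a : Fin 10) :
    Matrix.toLin' M (basisY a) = fun i => M i a := by
  funext i
  simp [basisY, Matrix.toLin'_apply, Matrix.mulVec_single]

lemma sw1_eq : sw1 = Matrix.toLin' M1 := by
  apply basisY.ext
  intro a
  rw [toLin'_basis]
  unfold sw1
  rw [Module.Basis.constr_basis]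
  fin_cases a <;> funext i <;>
    simp [sumE, bY, basisY, Pi.basisFun_apply, M1] <;> fin_cases i <;> simp

lemma sw2_eq : sw2 = Matrix.toLin' M2 := by
  apply basisY.ext
  intro a
  rw [toLin'_basis]
  unfold sw2
  rw [Module.Basis.constr_basis]
  fin_cases a <;> funext i <;>
    simp [sumE, bY, basisY, Pi.basisFun_apply, M2] <;> fin_cases i <;> simp

lemma deltaY_eq : deltaY = dvec := by
  funext i
  have : deltaY i = 2 * bY 0 i + 2 * bY 1 i
      - (∑ k ∈ ({0, 1} : Finset (Fin 10))ᶜ, bY k) i := rfl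
  rw [this, sumE]
  fin_cases i <;> simp [bY, basisY, Pi.basisFun_apply, dvec]

lemma key (M : Matrix (Fin 10) (Fin 10) ℤ) (hM : M.transpose * GY * M = GY)
    (hM2 : M * M = 1) (hd : M.mulVec dvec = dvec) :
    Matrix.toLin' M ∘ₗ Matrix.toLin' M = LinearMap.id ∧
    (∀ lam mu : LY, formY (Matrix.toLin' M lam) (Matrix.toLin' M mu) = formY lam mu) ∧
    Matrix.toLin' M deltaY = deltaY := by
  refine ⟨?_, ?_, ?_⟩
  · rw [← Matrix.toLin'_mul, hM2, Matrix.toLin'_one]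
  · intro lam mu
    have h := Matrix.toLinearMap₂'_comp (R := ℤ) GY M M
    rw [hM] at h
    have := congrFun (congrArg DFunLike.coe (congrFun (congrArg DFunLike.coe h) lam)) mu
    simpa [formY, GY, LinearMap.compl₁₂_apply] using this
  · rw [deltaY_eq]
    show M.mulVec dvec = dvec
    exact hd

/-- The switch actions `s₁`, `s₂` are involutions of `L_Y`, preserve the bilinear form,
and fix `δ = 2H₁ + 2H₂ - E₁ - ⋯ - E₈`. -/
theorem switches_involutions_isometries_fix_delta :
    (sw1 ∘ₗ sw1 = LinearMap.id ∧
      (∀ lam mu : LY, formY (sw1 lam) (sw1 mu) = formY lam mu) ∧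
      sw1 deltaY = deltaY) ∧
    (sw2 ∘ₗ sw2 = LinearMap.id ∧
      (∀ lam mu : LY, formY (sw2 lam) (sw2 mu) = formY lam mu) ∧
      sw2 deltaY = deltaY) := by

  constructor
  · rw [sw1_eq]
    exact key M1 (by decide) (by decide) (by decide)
  · rw [sw2_eq]
    exact key M2 (by decide) (by decide) (by decide)
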